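/- arXiv:math/0505579 — 5 statements merged into one kernel-verified Lean document; each statement's English description precedes it below -/
import Mathlib

section
/- Giving a filtration 0 ⊆ F^n ⊆ F^{n-1} ⊆ ⋯ ⊆ F^1 ⊆ H of subspaces of a complex vector space H with real structure, satisfying H = F^p ⊕ conjugate(F^{n-p+1}) for all p, is equivalent to giving a decomposition H = ⊕_{p+q=n} H^{p,q} with H^{p,q} = conjugate(H^{q,p}): explicitly, H^{p,q} = F^p ∩ conjugate(F^q) recovers the decomposition, and F^p = ⊕_{r≥p} H^{r,n-r} recovers the filtration. -/
open Submodule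

section aux

lemma aux_tri_le {α : Type*} [CompleteLattice α] (T : ℕ → α) (P Q : ℕ → Prop) (r : ℕ)
    (h1 : P r) (h2 : Q r) : T r ≤ ⨆ (r) (_ : P r) (_ : Q r), T r :=
  le_iSup_of_le r (le_iSup_of_le h1 (le_iSup_of_le h2 le_rfl))

lemma aux_triSup_le {α : Type*} [CompleteLattice α] {T : ℕ → α} {P Q : ℕ → Prop} {x : α}
    (h : ∀ r, P r → Q r → T r ≤ x) : (⨆ (r) (_ : P r) (_ : Q r), T r) ≤ x :=
  iSup_le fun r => iSup_le fun h1 => iSup_le fun h2 => h r h1 h2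

variable {H : Type*} [AddCommGroup H] [Module ℂ H]
  (c : H →ₛₗ[starRingEnd ℂ] H) (hc : ∀ x, c (c x) = x)

instance : RingHomSurjective (starRingEnd ℂ) :=
  ⟨fun y => ⟨star y, by rw [starRingEnd_apply, star_star]⟩⟩

include hc

lemma aux_comap_comap (S : Submodule ℂ H) : comap c (comap c S) = S := by
  ext x; simp [Submodule.mem_comap, hc x]

lemma aux_comap_bot : comap c (⊥ : Submodule ℂ H) = ⊥ := by
  ext x
  simp only [Submodule.mem_comap, Submodule.mem_bot]
  constructor
  · intro h; have := hc x; rw [h, map_zero] at this; exact this.symm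
  · rintro rfl; exact map_zero c

lemma aux_comap_eq_map (S : Submodule ℂ H) : comap c S = map c S := by
  ext x
  simp only [Submodule.mem_comap, Submodule.mem_map]
  constructor
  · intro h; exact ⟨c x, h, hc x⟩
  · rintro ⟨y, hy, rfl⟩; rwa [hc y]

lemma aux_comap_iSup {ι : Sort*} (T : ι → Submodule ℂ H) :
    comap c (⨆ i, T i) = ⨆ i, comap c (T i) := by
  rw [aux_comap_eq_map c hc, Submodule.map_iSup]
  exact iSup_congr fun i => (aux_comap_eq_map c hc _).symm

end aux

lemma aux_biSup_inf_biSup {R M ι : Type*} [Ring R] [AddCommGroup M] [Module R M]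
    [DecidableEq ι] {t : ι → Submodule R M} (ht : iSupIndep t)
    (P Q : ι → Prop) [DecidablePred P] [DecidablePred Q] :
    (⨆ (i) (_ : P i), t i) ⊓ (⨆ (i) (_ : Q i), t i) ≤ ⨆ (i) (_ : P i ∧ Q i), t i := by
  intro x hx
  obtain ⟨hxP, hxQ⟩ := Submodule.mem_inf.mp hx
  rw [Submodule.mem_biSup_iff_exists_dfinsupp] at hxP hxQ
  obtain ⟨f, hf⟩ := hxP
  obtain ⟨g, hg⟩ := hxQ
  have hfg : f.filter P = g.filter Q := ht.dfinsupp_lsum_injective (hf.trans hg.symm)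
  rw [Submodule.mem_biSup_iff_exists_dfinsupp]
  refine ⟨f, ?_⟩
  have key : f.filter (fun i => P i ∧ Q i) = g.filter Q := by
    ext i
    have h1 := DFunLike.congr_fun hfg i
    rw [DFinsupp.filter_apply, DFinsupp.filter_apply] at h1
    rw [DFinsupp.filter_apply, DFinsupp.filter_apply]
    by_cases hP : P i <;> by_cases hQ : Q i <;> simp_all
  rw [key]; exact hg

lemma aux_nat_fin {H : Type*} [AddCommGroup H] [Module ℂ H]
    (Hd : ℕ → Submodule ℂ H) (n : ℕ) (P : ℕ → Prop) :
    (⨆ (r : ℕ) (_ : P r) (_ : r ≤ n), Hd r) =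
      ⨆ (i : Fin (n + 1)) (_ : P i.1), Hd i.1 := by
  apply le_antisymm
  · exact aux_triSup_le fun r h1 h2 =>
      le_iSup_of_le ⟨r, by omega⟩ (le_iSup_of_le h1 le_rfl)
  · exact iSup_le fun i => iSup_le fun h =>
      aux_tri_le _ _ _ i.1 h (by omega)

/-- Equivalence of Hodge filtrations and Hodge decompositions on a complex
vector space `H` with real structure `c`. (a) A decreasing filtration
`⊥ = F^{n+1} ⊆ F^n ⊆ ⋯ ⊆ F^0 = H` with `H = F^p ⊕ conj(F^{n-p+1})` yields, via
`H^{p,q} := F^p ∩ conj(F^q)` (`q = n-p`), a direct sum decomposition with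
`H^{p,q} = conj(H^{q,p})`, and the filtration is recovered as `F^p = ⊕_{r ≥ p} H^{r,n-r}`.
(b) Conversely a decomposition `H = ⊕_{p+q=n} H^{p,q}` with `H^{p,q} = conj(H^{q,p})`
yields, via `F^p := ⊕_{r ≥ p} H^{r,n-r}`, a filtration with `H = F^p ⊕ conj(F^{n-p+1})`,
and `H^{p,q} = F^p ∩ conj(F^q)`.  Here `conj(S) = c ⁻¹ S (= c(S))`. -/
theorem stmt7 {H : Type*} [AddCommGroup H] [Module ℂ H] [FiniteDimensional ℂ H]
    (c : H →ₛₗ[starRingEnd ℂ] H) (hc : ∀ x, c (c x) = x) (n : ℕ) :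
    (∀ F : ℕ → Submodule ℂ H,
      (∀ p, F (p + 1) ≤ F p) → F 0 = ⊤ → F (n + 1) = ⊥ →
      (∀ p, 1 ≤ p → p ≤ n → IsCompl (F p) (Submodule.comap c (F (n - p + 1)))) →
      (DirectSum.IsInternal
          (fun p : Fin (n + 1) => F p.1 ⊓ Submodule.comap c (F (n - p.1))) ∧
        (∀ p ≤ n, Submodule.comap c (F p ⊓ Submodule.comap c (F (n - p)))
            = F (n - p) ⊓ Submodule.comap c (F p)) ∧
        (∀ p ≤ n, F p =
          ⨆ (r : ℕ) (_ : p ≤ r) (_ : r ≤ n), F r ⊓ Submodule.comap c (F (n - r))))) ∧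
    (∀ Hd : ℕ → Submodule ℂ H,
      DirectSum.IsInternal (fun p : Fin (n + 1) => Hd p.1) →
      (∀ p ≤ n, Submodule.comap c (Hd p) = Hd (n - p)) →
      ((∀ p, 1 ≤ p → p ≤ n →
          IsCompl (⨆ (r : ℕ) (_ : p ≤ r) (_ : r ≤ n), Hd r)
            (Submodule.comap c (⨆ (r : ℕ) (_ : n - p + 1 ≤ r) (_ : r ≤ n), Hd r))) ∧
        (∀ p ≤ n, Hd p =
          (⨆ (r : ℕ) (_ : p ≤ r) (_ : r ≤ n), Hd r) ⊓
            Submodule.comap c (⨆ (r : ℕ) (_ : n - p ≤ r) (_ : r ≤ n), Hd r)))) := by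
  classical
  constructor
  · -- Part (a)
    intro F hdec h0 hbot hcompl
    have hF : ∀ a b : ℕ, a ≤ b → F b ≤ F a := fun a b h => by
      induction b, h using Nat.le_induction with
      | base => exact le_rfl
      | succ b hb ih => exact (hdec b).trans ih
    -- key step: F k = (F k ⊓ conj (F (n-k))) ⊔ F (k+1) for k ≤ n
    have step : ∀ k ≤ n, F k = (F k ⊓ comap c (F (n - k))) ⊔ F (k + 1) := by
      intro k hk
      rcases eq_or_lt_of_le hk with rfl | hlt
      · simp [Nat.sub_self, h0, hbot, Submodule.comap_top]
      · apply le_antisymm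
        · intro x hx
          have hcd := (hcompl (k + 1) (by omega) (by omega)).codisjoint.eq_top
          have hx2 : x ∈ F (k + 1) ⊔ comap c (F (n - (k + 1) + 1)) := by
            rw [hcd]; trivial
          obtain ⟨u, hu, v, hv, huv⟩ := Submodule.mem_sup.mp hx2
          rw [show n - (k + 1) + 1 = n - k by omega] at hv
          have hvx : v = x - u := by rw [← huv, add_sub_cancel_left]
          have hvF : v ∈ F k := by
            rw [hvx]; exact sub_mem hx (hF k (k + 1) (Nat.le_succ k) hu)
          exact Submodule.mem_sup.mpr
            ⟨v, Submodule.mem_inf.mpr ⟨hvF, hv⟩, u, hu, by rw [add_comm]; exact huv⟩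
        · exact sup_le inf_le_left (hdec k)
    -- the filtration is the sum of the pieces above it
    have L1 : ∀ m ≤ n + 1, F (n + 1 - m) =
        ⨆ (r : ℕ) (_ : n + 1 - m ≤ r) (_ : r ≤ n), F r ⊓ comap c (F (n - r)) := by
      intro m
      induction m with
      | zero =>
        intro _
        simp only [Nat.sub_zero]
        rw [hbot]
        symm
        apply le_antisymm _ bot_le
        exact aux_triSup_le fun r h1 h2 => absurd h1 (by omega)
      | succ m ih =>
        intro hm
        have hrec := ih (by omega)
        rw [show n + 1 - m = n - m + 1 by omega] at hrec
        rw [show n + 1 - (m + 1) = n - m by omega]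
        rw [step (n - m) (by omega), hrec]
        apply le_antisymm
        · apply sup_le
          · exact aux_tri_le (fun r => F r ⊓ comap c (F (n - r))) (fun r => n - m ≤ r) (fun r => r ≤ n)
              (n - m) le_rfl (by omega)
          · exact aux_triSup_le fun r h1 h2 =>
              aux_tri_le (fun r => F r ⊓ comap c (F (n - r))) (fun r => n - m ≤ r) (fun r => r ≤ n) r (by omega) h2
        · refine aux_triSup_le fun r h1 h2 => ?_
          rcases eq_or_lt_of_le h1 with rfl | hlt
          · exact le_sup_left
          · exact le_sup_of_le_right (aux_tri_le (fun r => F r ⊓ comap c (F (n - r)))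
              (fun r => n - m + 1 ≤ r) (fun r => r ≤ n) r (by omega) h2)
    have hsupeq : ∀ p ≤ n + 1, F p =
        ⨆ (r : ℕ) (_ : p ≤ r) (_ : r ≤ n), F r ⊓ comap c (F (n - r)) := by
      intro p hp
      have := L1 (n + 1 - p) (by omega)
      rwa [show n + 1 - (n + 1 - p) = p by omega] at this
    refine ⟨?_, ?_, fun p hp => hsupeq p (by omega)⟩
    · rw [DirectSum.isInternal_submodule_iff_iSupIndep_and_iSup_eq_top]
      constructor
      · intro i
        rw [Submodule.disjoint_def]
        intro x hxS hxsup
        obtain ⟨hxF, hxC⟩ := Submodule.mem_inf.mp hxS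
        have hle2 : (⨆ (j : Fin (n + 1)) (_ : j ≠ i), F j.1 ⊓ comap c (F (n - j.1))) ≤
            F (i.1 + 1) ⊔ comap c (F (n - i.1 + 1)) := by
          refine iSup_le fun j => iSup_le fun hj => ?_
          have hji : j.1 ≠ i.1 := fun h => hj (Fin.ext h)
          rcases Nat.lt_or_ge j.1 i.1 with hji' | hji'
          · exact le_sup_of_le_right
              (inf_le_right.trans (Submodule.comap_mono (hF _ _ (by omega))))
          · exact le_sup_of_le_left (inf_le_left.trans (hF _ _ (by omega)))
        obtain ⟨u, hu, v, hv, huv⟩ := Submodule.mem_sup.mp (hle2 hxsup)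
        have hvx : v = x - u := by rw [← huv, add_sub_cancel_left]
        have hvF : v ∈ F i.1 := by
          rw [hvx]; exact sub_mem hxF (hF i.1 (i.1 + 1) (Nat.le_succ _) hu)
        have hv0 : v = 0 := by
          rcases Nat.eq_zero_or_pos i.1 with h0' | h1
          · have hv' : v ∈ comap c (F (n + 1)) := by
              rw [show n + 1 = n - i.1 + 1 by omega]; exact hv
            rw [hbot, aux_comap_bot c hc] at hv'
            exact hv'
          · exact Submodule.disjoint_def.mp (hcompl i.1 h1 (by omega)).disjoint v hvF hv
        have hxu : x = u := by rw [← huv, hv0, add_zero]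
        have hxF1 : x ∈ F (i.1 + 1) := hxu ▸ hu
        rcases Nat.lt_or_ge i.1 n with hin | hin
        · refine Submodule.disjoint_def.mp
            (hcompl (i.1 + 1) (by omega) (by omega)).disjoint x hxF1 ?_
          rw [show n - (i.1 + 1) + 1 = n - i.1 by omega]
          exact hxC
        · have : i.1 + 1 = n + 1 := by omega
          rw [this, hbot] at hxF1
          exact hxF1
      · have h00 := hsupeq 0 (by omega)
        rw [h0] at h00
        apply le_antisymm le_top
        rw [h00]
        exact aux_triSup_le fun r _ h2 => le_iSup_of_le ⟨r, by omega⟩ le_rfl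
    · intro p hp
      rw [Submodule.comap_inf, aux_comap_comap c hc]
      exact inf_comm _ _
  · -- Part (b)
    intro Hd hint hconj
    obtain ⟨hind, hsup⟩ :=
      (DirectSum.isInternal_submodule_iff_iSupIndep_and_iSup_eq_top _).mp hint
    have hcsup : ∀ P : ℕ → Prop,
        comap c (⨆ (r : ℕ) (_ : P r) (_ : r ≤ n), Hd r) =
          ⨆ (r : ℕ) (_ : P r) (_ : r ≤ n), comap c (Hd r) := by
      intro P
      rw [aux_comap_iSup c hc]
      refine iSup_congr fun r => ?_
      rw [aux_comap_iSup c hc]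
      refine iSup_congr fun _ => ?_
      rw [aux_comap_iSup c hc]
    constructor
    · intro p hp1 hpn
      have e1 : comap c (⨆ (r : ℕ) (_ : n - p + 1 ≤ r) (_ : r ≤ n), Hd r) =
          ⨆ (r : ℕ) (_ : r < p) (_ : r ≤ n), Hd r := by
        rw [hcsup]
        apply le_antisymm
        · refine aux_triSup_le fun r h1 h2 => ?_
          rw [hconj r h2]
          exact aux_tri_le Hd (fun r => r < p) (fun r => r ≤ n) (n - r) (by omega) (by omega)
        · refine aux_triSup_le fun s h1 h2 => ?_
          have hs : Hd s = comap c (Hd (n - s)) := by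
            rw [hconj (n - s) (by omega), show n - (n - s) = s by omega]
          rw [hs]
          exact aux_tri_le (fun r => comap c (Hd r)) (fun r => n - p + 1 ≤ r) (fun r => r ≤ n)
            (n - s) (by omega) (by omega)
      rw [e1]
      constructor
      · rw [disjoint_iff_inf_le, aux_nat_fin, aux_nat_fin]
        refine (aux_biSup_inf_biSup hind _ _).trans ?_
        exact iSup_le fun i => iSup_le fun h => absurd h (by omega)
      · rw [codisjoint_iff, eq_top_iff, ← hsup]
        refine iSup_le fun i => ?_
        rcases Nat.lt_or_ge i.1 p with h | h
        · exact le_sup_of_le_right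
            (aux_tri_le Hd (fun r => r < p) (fun r => r ≤ n) i.1 h (by omega))
        · exact le_sup_of_le_left
            (aux_tri_le Hd (fun r => p ≤ r) (fun r => r ≤ n) i.1 h (by omega))
    · intro p hp
      have e2 : comap c (⨆ (r : ℕ) (_ : n - p ≤ r) (_ : r ≤ n), Hd r) =
          ⨆ (r : ℕ) (_ : r ≤ p) (_ : r ≤ n), Hd r := by
        rw [hcsup]
        apply le_antisymm
        · refine aux_triSup_le fun r h1 h2 => ?_
          rw [hconj r h2]
          exact aux_tri_le Hd (fun r => r ≤ p) (fun r => r ≤ n) (n - r) (by omega) (by omega)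
        · refine aux_triSup_le fun s h1 h2 => ?_
          have hs : Hd s = comap c (Hd (n - s)) := by
            rw [hconj (n - s) (by omega), show n - (n - s) = s by omega]
          rw [hs]
          exact aux_tri_le (fun r => comap c (Hd r)) (fun r => n - p ≤ r) (fun r => r ≤ n)
            (n - s) (by omega) (by omega)
      rw [e2]
      apply le_antisymm
      · exact le_inf (aux_tri_le Hd (fun r => p ≤ r) (fun r => r ≤ n) p le_rfl hp)
          (aux_tri_le Hd (fun r => r ≤ p) (fun r => r ≤ n) p le_rfl hp)
      · rw [aux_nat_fin, aux_nat_fin]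
        refine (aux_biSup_inf_biSup hind _ _).trans ?_
        refine iSup_le fun i => iSup_le fun h => ?_
        have : i.1 = p := by omega
        rw [this]
end

section
/- Let X ∈ W be written as X = Σᵢ (aᵢ gᵢ + āᵢ g₋ᵢ) where gᵢ are root vectors for positive noncompact roots with Jgᵢ = √-1 gᵢ and g₋ᵢ = conjugate of gᵢ. Then the component of [X, JX] in the Cartan subalgebra equals -2√-1 Σᵢ |aᵢ|² [gᵢ, g₋ᵢ]. In particular, since each [gᵢ, g₋ᵢ] lies in the positive cone of coroots, [X, JX] = 0 implies X = 0. -/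
/-!
Expanding `[X, JX]` bilinearly, the projection `π` kills every bracket of two root vectors
except the `[gᵢ, g₋ᵢ]` and their negatives `[g₋ᵢ, gᵢ]`, and the coefficient in front of
`[gᵢ, g₋ᵢ]` is `aᵢ (-√-1 āᵢ) - āᵢ (√-1 aᵢ) = -2√-1 |aᵢ|²`. If `[X, JX] = 0`, the
nonnegative combination `Σᵢ |aᵢ|² [gᵢ, g₋ᵢ]` vanishes, so the cone condition forces `aᵢ = 0`.
-/

section RootPairs

variable {R L I : Type*} [CommRing R] [LieRing L] [LieAlgebra R L]
  {g gneg : I → L} {π : L →ₗ[R] L}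

theorem map_lie_rootPair_of_ne (hπcross : ∀ i j, i ≠ j → π ⁅g i, gneg j⁆ = 0)
    (hπpp : ∀ i j, π ⁅g i, g j⁆ = 0) (hπmm : ∀ i j, π ⁅gneg i, gneg j⁆ = 0)
    {i j : I} (hij : i ≠ j) (a b c d : R) :
    π ⁅a • g i + b • gneg i, c • g j + d • gneg j⁆ = 0 := by
  have hmp : π ⁅gneg i, g j⁆ = 0 := by
    rw [← lie_skew, map_neg, hπcross j i hij.symm, neg_zero]
  simp [hπcross i j hij, hπpp, hπmm, hmp]

theorem map_lie_rootPair_self (hπdiag : ∀ i, π ⁅g i, gneg i⁆ = ⁅g i, gneg i⁆)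
    (hπpp : ∀ i j, π ⁅g i, g j⁆ = 0) (hπmm : ∀ i j, π ⁅gneg i, gneg j⁆ = 0)
    (i : I) (a b c d : R) :
    π ⁅a • g i + b • gneg i, c • g i + d • gneg i⁆ = (a * d - b * c) • ⁅g i, gneg i⁆ := by
  have hmp : π ⁅gneg i, g i⁆ = -⁅g i, gneg i⁆ := by
    rw [← lie_skew, map_neg, hπdiag i]
  simp only [add_lie, lie_add, smul_lie, lie_smul, map_add, map_smul, hπdiag i, hπpp, hπmm,
    hmp, smul_zero, add_zero, zero_add, smul_neg, smul_smul, sub_smul]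
  rw [mul_comm c b, mul_comm d a, sub_eq_add_neg, add_comm]

theorem map_lie_sum_rootPairs [Fintype I]
    (hπdiag : ∀ i, π ⁅g i, gneg i⁆ = ⁅g i, gneg i⁆)
    (hπcross : ∀ i j, i ≠ j → π ⁅g i, gneg j⁆ = 0)
    (hπpp : ∀ i j, π ⁅g i, g j⁆ = 0) (hπmm : ∀ i j, π ⁅gneg i, gneg j⁆ = 0)
    (a b c d : I → R) :
    π ⁅∑ i, (a i • g i + b i • gneg i), ∑ j, (c j • g j + d j • gneg j)⁆ =
      ∑ i, (a i * d i - b i * c i) • ⁅g i, gneg i⁆ := by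
  rw [sum_lie_sum, map_sum]
  refine Finset.sum_congr rfl fun i _ => ?_
  rw [map_sum, Finset.sum_eq_single i (fun j _ hji => map_lie_rootPair_of_ne hπcross hπpp hπmm
    (Ne.symm hji) _ _ _ _) (by simp)]
  exact map_lie_rootPair_self hπdiag hπpp hπmm i _ _ _ _

end RootPairs

theorem eq_zero_of_sum_normSq_smul_eq_zero {L I : Type*} [AddCommGroup L] [Module ℂ L]
    [Fintype I] {h : I → L}
    (hcone : ∀ t : I → ℝ, (∀ i, 0 ≤ t i) → (∑ i, (t i : ℂ) • h i) = 0 → ∀ i, t i = 0)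
    {a : I → ℂ} (hsum : ∑ i, (Complex.normSq (a i) : ℂ) • h i = 0) (i : I) : a i = 0 :=
  Complex.normSq_eq_zero.mp <|
    hcone (fun j => Complex.normSq (a j)) (fun _ => Complex.normSq_nonneg _) hsum i

theorem stmt8_general {L : Type*} [LieRing L] [LieAlgebra ℂ L]
    {I : Type*} [Fintype I]
    (g gneg : I → L)
    (π : L →ₗ[ℂ] L)
    (hπdiag : ∀ i, π ⁅g i, gneg i⁆ = ⁅g i, gneg i⁆)
    (hπcross : ∀ i j, i ≠ j → π ⁅g i, gneg j⁆ = 0)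
    (hπpp : ∀ i j, π ⁅g i, g j⁆ = 0)
    (hπmm : ∀ i j, π ⁅gneg i, gneg j⁆ = 0)
    (hcone : ∀ t : I → ℝ, (∀ i, 0 ≤ t i) →
      (∑ i, (t i : ℂ) • ⁅g i, gneg i⁆) = 0 → ∀ i, t i = 0)
    (a : I → ℂ) (X JX : L)
    (hX : X = ∑ i, (a i • g i + (starRingEnd ℂ (a i)) • gneg i))
    (hJX : JX = ∑ i, ((Complex.I * a i) • g i +
      (-Complex.I * starRingEnd ℂ (a i)) • gneg i)) :
    π ⁅X, JX⁆ = (-2 * Complex.I) •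
        ∑ i, ((Complex.normSq (a i) : ℂ)) • ⁅g i, gneg i⁆ ∧
    (⁅X, JX⁆ = 0 → ∀ i, a i = 0) := by
  have hcartan : π ⁅X, JX⁆ = (-2 * Complex.I) •
      ∑ i, ((Complex.normSq (a i) : ℂ)) • ⁅g i, gneg i⁆ := by
    rw [hX, hJX, map_lie_sum_rootPairs hπdiag hπcross hπpp hπmm, Finset.smul_sum]
    refine Finset.sum_congr rfl fun i _ => ?_
    rw [smul_smul, ← Complex.mul_conj]
    ring_nf
  refine ⟨hcartan, fun hzero => eq_zero_of_sum_normSq_smul_eq_zero hcone ?_⟩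
  rw [hzero, map_zero, eq_comm, smul_eq_zero] at hcartan
  exact hcartan.resolve_left (by simp)

/-- For `X = Σᵢ (aᵢ gᵢ + āᵢ g₋ᵢ)` with `gᵢ` root vectors for distinct
positive noncompact roots, `J gᵢ = √-1 gᵢ`, `g₋ᵢ = conj gᵢ` (so
`JX = Σᵢ (√-1 aᵢ gᵢ - √-1 āᵢ g₋ᵢ)`), the component of `[X, JX]` in the Cartan
subalgebra (extracted by the projection `π` killing all non-Cartan root spaces) equals
`-2√-1 Σᵢ |aᵢ|² [gᵢ, g₋ᵢ]`.  Since the `[gᵢ, g₋ᵢ]` lie in the positive coroot cone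
(no nontrivial nonnegative combination vanishes), `[X, JX] = 0` forces `X = 0`. -/
theorem stmt8 {L : Type*} [LieRing L] [LieAlgebra ℂ L]
    {I : Type*} [Fintype I] [DecidableEq I]
    (g gneg : I → L)
    (π : L →ₗ[ℂ] L)
    (hπdiag : ∀ i, π ⁅g i, gneg i⁆ = ⁅g i, gneg i⁆)
    (hπcross : ∀ i j, i ≠ j → π ⁅g i, gneg j⁆ = 0)
    (hπpp : ∀ i j, π ⁅g i, g j⁆ = 0)
    (hπmm : ∀ i j, π ⁅gneg i, gneg j⁆ = 0)
    (hcone : ∀ t : I → ℝ, (∀ i, 0 ≤ t i) →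
      (∑ i, (t i : ℂ) • ⁅g i, gneg i⁆) = 0 → ∀ i, t i = 0)
    (a : I → ℂ) (X JX : L)
    (hX : X = ∑ i, (a i • g i + (starRingEnd ℂ (a i)) • gneg i))
    (hJX : JX = ∑ i, ((Complex.I * a i) • g i +
      (-Complex.I * starRingEnd ℂ (a i)) • gneg i)) :
    π ⁅X, JX⁆ = (-2 * Complex.I) •
        ∑ i, ((Complex.normSq (a i) : ℂ)) • ⁅g i, gneg i⁆ ∧
    (⁅X, JX⁆ = 0 → ∀ i, a i = 0) :=
  stmt8_general g gneg π hπdiag hπcross hπpp hπmm hcone a X JX hX hJX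
end

section
/- Let p : M → N be a smooth map from an almost complex manifold (M,J) with J integrable to a Riemannian manifold (N, ∇) with Levi-Civita connection ∇. Suppose that for all vector fields X, Y, Z on M the identity (p_*Y, ∇_{p_*X} p_*JZ) + (p_*JY, ∇_{p_*X} p_*Z) - (p_*X, ∇_{p_*Y} p_*JZ) + (p_*X, ∇_{p_*Z} p_*JY) - (p_*JX, ∇_{p_*Y} p_*Z) + (p_*JX, ∇_{p_*Z} p_*Y) = 0 holds. Then p is pluriharmonic: ∇_{p_*X} p_*X + ∇_{p_*JX} p_*JX + p_*J[X,JX] = 0 for all vector fields X. -/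
/-- (Algebraic formulation.) `V` models the Lie algebra of vector fields
on the complex manifold `M` with integrable complex structure `J`, `W` the vector
fields on the Riemannian manifold `N` (with metric `g` valued in the functions `A` and
Levi-Civita connection `D`), and `P = p_*`.  If the six-term identity
`(p_*Y, ∇_{p_*X} p_*JZ) + (p_*JY, ∇_{p_*X} p_*Z) - (p_*X, ∇_{p_*Y} p_*JZ)
 + (p_*X, ∇_{p_*Z} p_*JY) - (p_*JX, ∇_{p_*Y} p_*Z) + (p_*JX, ∇_{p_*Z} p_*Y) = 0`
holds for all vector fields `X, Y, Z`, then `p` is pluriharmonic: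
`∇_{p_*X} p_*X + ∇_{p_*JX} p_*JX + p_*J[X,JX] = 0`. -/
theorem stmt12 {V : Type*} [LieRing V] [LieAlgebra ℝ V]
    {W : Type*} [AddCommGroup W] [Module ℝ W]
    {A : Type*} [AddCommGroup A] [Module ℝ A]
    (J : V →ₗ[ℝ] V) (hJ2 : ∀ X, J (J X) = -X)
    (hNij : ∀ X Y, ⁅J X, J Y⁆ - ⁅X, Y⁆ - J ⁅J X, Y⁆ - J ⁅X, J Y⁆ = 0)
    (P : V →ₗ[ℝ] W)
    (g : W →ₗ[ℝ] W →ₗ[ℝ] A) (hgsym : ∀ u v, g u v = g v u)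
    (hskew : ∀ X Y : V, g (P X) (P (J Y)) = -g (P Y) (P (J X)))
    (hnondeg : ∀ u : W, (∀ Y : V, g (P Y) u = 0) → u = 0)
    (D : W →ₗ[ℝ] W →ₗ[ℝ] W)
    (htors : ∀ X Y : V, D (P X) (P Y) - D (P Y) (P X) = P ⁅X, Y⁆)
    (hyp : ∀ X Y Z : V,
      g (P Y) (D (P X) (P (J Z))) + g (P (J Y)) (D (P X) (P Z))
        - g (P X) (D (P Y) (P (J Z))) + g (P X) (D (P Z) (P (J Y)))
        - g (P (J X)) (D (P Y) (P Z)) + g (P (J X)) (D (P Z) (P Y)) = 0) :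
    ∀ X : V, D (P X) (P X) + D (P (J X)) (P (J X)) + P (J ⁅X, J X⁆) = 0 := by

  intro X
  apply hnondeg
  intro Y
  have h1 := hyp X (J X) Y
  have h2 := hyp X Y (J X)
  have h3 := hyp (J X) X Y
  have h4 := hyp (J X) Y X
  have t : g (P (J Y)) (D (P X) (P (J X))) - g (P (J Y)) (D (P (J X)) (P X))
      = g (P (J Y)) (P ⁅X, J X⁆) := by rw [← map_sub, htors]
  have s : g (P Y) (P (J ⁅X, J X⁆)) = -g (P ⁅X, J X⁆) (P (J Y)) := hskew Y ⁅X, J X⁆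
  have sy : g (P ⁅X, J X⁆) (P (J Y)) = g (P (J Y)) (P ⁅X, J X⁆) := hgsym _ _
  simp only [hJ2, map_neg, LinearMap.neg_apply, neg_neg, map_add] at h1 h2 h3 h4 ⊢
  linear_combination (norm := module) (-(1/2 : ℝ)) • h1 - h2 + ((1/2 : ℝ)) • h3 + h4
    + t + s - sy
end

section
/- Let G/K be a Riemannian symmetric space of noncompact type with curvature tensor R(X,Y,X,Y) = -‖[X,Y]‖² at the base point (X, Y ∈ p, the -1 Cartan eigenspace). Let U ⊆ G/K be an immersed complex submanifold whose second fundamental form h satisfies h(Y,Y) + h(JY,JY) = 0 for all tangent vectors Y (pluriharmonicity of the inclusion). Then the holomorphic bisectional curvature of U in the induced metric is nonpositive: R̃(X,JX,Y,JY) ≤ 0 as expressed through R̃(X,Y,X,Y) + R̃(X,JY,X,JY) ≤ 0 for all tangent X, Y. -/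
open RealInnerProductSpace

/-- (Pointwise formulation at the base point.) Let `T` be the tangent
space of the immersed complex submanifold `U` of a symmetric space `G/K` of noncompact
type, whose curvature satisfies `R(X,Y,X,Y) = -‖[X,Y]‖²`.  If the second fundamental
form `h` satisfies `h(Y,Y) + h(JY,JY) = 0` (pluriharmonicity), then the Gauss equation
gives nonpositive holomorphic bisectional curvature:
`R̃(X,Y,X,Y) + R̃(X,JY,X,JY) ≤ 0`. -/
theorem stmt14 {T : Type*} [NormedAddCommGroup T] [InnerProductSpace ℝ T]
    {Nor : Type*} [NormedAddCommGroup Nor] [InnerProductSpace ℝ Nor]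
    {Pc : Type*} [NormedAddCommGroup Pc] [InnerProductSpace ℝ Pc]
    (J : T →ₗ[ℝ] T) (hJ2 : ∀ X, J (J X) = -X)
    (hJorth : ∀ X Y : T, ⟪J X, J Y⟫ = ⟪X, Y⟫)
    (br : T →ₗ[ℝ] T →ₗ[ℝ] Pc)
    (R Rt : T → T → T → T → ℝ)
    (hR : ∀ X Y, R X Y X Y = -(‖br X Y‖ ^ 2))
    (h : T →ₗ[ℝ] T →ₗ[ℝ] Nor) (hsymm : ∀ X Y, h X Y = h Y X)
    (hGauss : ∀ X Y, Rt X Y X Y = R X Y X Y + ⟪h X X, h Y Y⟫ - ‖h X Y‖ ^ 2)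
    (hph : ∀ Y, h Y Y + h (J Y) (J Y) = 0) :
    ∀ X Y, Rt X Y X Y + Rt X (J Y) X (J Y) ≤ 0 := by
  intro X Y
  have key : ⟪h X X, h Y Y⟫ + ⟪h X X, h (J Y) (J Y)⟫ = 0 := by
    rw [← inner_add_right, hph Y, inner_zero_right]
  rw [hGauss, hGauss, hR, hR]
  nlinarith [sq_nonneg ‖br X Y‖, sq_nonneg ‖br X (J Y)‖, sq_nonneg ‖h X Y‖, sq_nonneg ‖h X (J Y)‖]
end

section
/- In the same setting, if additionally there is a constant c > 0 with ‖[X,JX]‖ ≥ c‖X‖² for all tangent vectors X of U at the base point, then the holomorphic sectional curvature satisfies R̃(X,JX,X,JX) ≤ -c²‖X‖⁴, i.e., is bounded above by a negative constant for unit vectors. -/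
open RealInnerProductSpace

/-- In the setting of Statement 14, if moreover `‖[X,JX]‖ ≥ c ‖X‖²` for
some `c > 0` and all tangent vectors `X`, then the holomorphic sectional curvature
satisfies `R̃(X,JX,X,JX) ≤ -c² ‖X‖⁴`. -/
theorem stmt15 {T : Type*} [NormedAddCommGroup T] [InnerProductSpace ℝ T]
    {Nor : Type*} [NormedAddCommGroup Nor] [InnerProductSpace ℝ Nor]
    {Pc : Type*} [NormedAddCommGroup Pc] [InnerProductSpace ℝ Pc]
    (J : T →ₗ[ℝ] T) (hJ2 : ∀ X, J (J X) = -X)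
    (hJorth : ∀ X Y : T, ⟪J X, J Y⟫ = ⟪X, Y⟫)
    (br : T →ₗ[ℝ] T →ₗ[ℝ] Pc)
    (R Rt : T → T → T → T → ℝ)
    (hR : ∀ X Y, R X Y X Y = -(‖br X Y‖ ^ 2))
    (h : T →ₗ[ℝ] T →ₗ[ℝ] Nor) (hsymm : ∀ X Y, h X Y = h Y X)
    (hGauss : ∀ X Y, Rt X Y X Y = R X Y X Y + ⟪h X X, h Y Y⟫ - ‖h X Y‖ ^ 2)
    (hph : ∀ Y, h Y Y + h (J Y) (J Y) = 0)
    (c : ℝ) (hc : 0 < c)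
    (hbr : ∀ X : T, ‖br X (J X)‖ ≥ c * ‖X‖ ^ 2) :
    ∀ X : T, Rt X (J X) X (J X) ≤ -(c ^ 2) * ‖X‖ ^ 4 := by
  intro X
  have hneg : h (J X) (J X) = -(h X X) := by
    exact eq_neg_of_add_eq_zero_left (by rw [add_comm]; exact hph X)
  have key : Rt X (J X) X (J X)
      = -(‖br X (J X)‖ ^ 2) - ‖h X X‖ ^ 2 - ‖h X (J X)‖ ^ 2 := by
    rw [hGauss, hR, hneg, inner_neg_right, real_inner_self_eq_norm_sq]
    ring
  have h1 : ‖br X (J X)‖ ^ 2 ≥ (c * ‖X‖ ^ 2) ^ 2 := by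
    apply pow_le_pow_left₀ (by positivity) (hbr X)
  nlinarith [sq_nonneg (‖h X X‖), sq_nonneg (‖h X (J X)‖)]
end
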